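/- Let n ∈ ℕ with n > 1 and let γ₁,…,γₙ ∈ ℝ satisfy 0 ≤ γᵢ ≤ 1/2 for all i, at least one γᵢ ≠ 0, and γ₁ = 1/2 or Σ_{i=2}^{n} γᵢ = (n−1)γ₁. Let Ṽ_{γ₁,…,γₙ} be the normalised gonosomal operator with these parameters and R = {(x₁,…,xₙ,u) ∈ S^{n,1} : γᵢ xᵢ > 0 for some i}. Then for every initial point s ∈ R, the sequence Ṽ_{γ₁,…,γₙ}^k(s) converges in ℝ^{n+1} as k → ∞. -/

import Mathlib

open Finset

/-- The gonosomal operator with a single male genotype and parameters `γ₁,…,γₙ`,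
acting on pairs `(x, u)` with `x : Fin n → ℝ` the female genotype frequencies and
`u : ℝ` the male genotype frequency.  The coordinate of index `0` plays the role
of `x₁`. -/
noncomputable def gonOp (n : ℕ) (γ : Fin n → ℝ) (p : (Fin n → ℝ) × ℝ) :
    (Fin n → ℝ) × ℝ :=
  (fun j =>
    if (j : ℕ) = 0 then p.2 * ∑ i, γ i * p.1 i
    else p.2 * ∑ i, ((1 - 2 * γ i) / ((n : ℝ) - 1)) * p.1 i,
   p.2 * ∑ i, γ i * p.1 i)

/-- The normalised gonosomal operator with parameters `γ₁,…,γₙ`. -/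
noncomputable def ngonOp (n : ℕ) (γ : Fin n → ℝ) (p : (Fin n → ℝ) × ℝ) :
    (Fin n → ℝ) × ℝ :=
  (fun j =>
    if (j : ℕ) = 0 then (∑ i, γ i * p.1 i) / (∑ i, p.1 i)
    else (∑ i, (1 - 2 * γ i) * p.1 i) / (((n : ℝ) - 1) * ∑ i, p.1 i),
   (∑ i, γ i * p.1 i) / (∑ i, p.1 i))

/-- The set `S^{n,1}` of frequency distributions. -/
def Sn1 (n : ℕ) : Set ((Fin n → ℝ) × ℝ) :=
  {p | (∀ i, 0 ≤ p.1 i) ∧ 0 ≤ p.2 ∧ 0 < ∑ i, p.1 i ∧ 0 < p.2 ∧ (∑ i, p.1 i) + p.2 = 1}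

/-!
After one step every orbit lies on the segment `t ↦ (t, (1-2t)/(n-1), …, (1-2t)/(n-1), t)`,
along which the operator acts through a Möbius map of `t ∈ [0, 1/2]`. The hypothesis on `γ`
makes that map monotone on `[0, 1/2]`, so the orbit of `t` is monotone and bounded.
-/

section Orbits

open Set

theorem iterate_apply_eq_of_semiconjOn {α β : Type*} {f : α → α} {F : β → β} {e : α → β}
    {s : Set α} (hf : MapsTo f s s) (h : ∀ x ∈ s, F (e x) = e (f x)) {x : α} (hx : x ∈ s) :
    ∀ k, F^[k] (e x) = e (f^[k] x)
  | 0 => rfl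
  | k + 1 => by
    rw [Function.iterate_succ_apply', iterate_apply_eq_of_semiconjOn hf h hx k,
      h _ (hf.iterate k hx), Function.iterate_succ_apply']

theorem MonotoneOn.monotone_iterate_of_le_map {α : Type*} [Preorder α] {f : α → α}
    {s : Set α} (hf : MonotoneOn f s) (hs : MapsTo f s s) {x : α} (hx : x ∈ s)
    (hxf : x ≤ f x) : Monotone fun k => f^[k] x := by
  refine monotone_nat_of_le_succ fun k => ?_
  induction k with
  | zero => exact hxf
  | succ k ih =>
    calc f^[k + 1] x = f (f^[k] x) := Function.iterate_succ_apply' f k x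
      _ ≤ f (f^[k + 1] x) := hf (hs.iterate k hx) (hs.iterate (k + 1) hx) ih
      _ = f^[k + 1 + 1] x := (Function.iterate_succ_apply' f (k + 1) x).symm

theorem MonotoneOn.antitone_iterate_of_map_le {α : Type*} [Preorder α] {f : α → α}
    {s : Set α} (hf : MonotoneOn f s) (hs : MapsTo f s s) {x : α} (hx : x ∈ s)
    (hfx : f x ≤ x) : Antitone fun k => f^[k] x :=
  MonotoneOn.monotone_iterate_of_le_map (α := αᵒᵈ) hf.dual hs hx hfx

theorem MonotoneOn.exists_tendsto_iterate_of_mapsTo_Icc {α : Type*}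
    [ConditionallyCompleteLinearOrder α] [TopologicalSpace α] [OrderTopology α]
    {f : α → α} {a b : α} (hf : MonotoneOn f (Icc a b)) (hs : MapsTo f (Icc a b) (Icc a b))
    {x : α} (hx : x ∈ Icc a b) :
    ∃ L, Filter.Tendsto (fun k => f^[k] x) Filter.atTop (nhds L) := by
  have hmem : ∀ k, f^[k] x ∈ Icc a b := fun k => hs.iterate k hx
  rcases le_total x (f x) with hxf | hfx
  · exact ⟨_, tendsto_atTop_ciSup (hf.monotone_iterate_of_le_map hs hx hxf)
      ⟨b, forall_mem_range.2 fun k => (hmem k).2⟩⟩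
  · exact ⟨_, tendsto_atTop_ciInf (hf.antitone_iterate_of_map_le hs hx hfx)
      ⟨a, forall_mem_range.2 fun k => (hmem k).1⟩⟩

end Orbits

section ReducedMap

open Set

variable {m c g : ℝ}

/-- The normalised gonosomal operator restricted to the segment `ngonLine`, written in the
parameter `t` of that segment; here `m = n - 1`, `c = γ₁` and `g = γ₂ + ⋯ + γₙ`. -/
noncomputable def ngonReduced (m c g t : ℝ) : ℝ :=
  (c * (m * t) + g * (1 - 2 * t)) / (m * (1 - t))

theorem ngonReduced_mapsTo (hm : 0 < m) (hc : c ∈ Icc (0 : ℝ) (1 / 2)) (hg : g ∈ Icc 0 (m / 2)) :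
    MapsTo (ngonReduced m c g) (Icc 0 (1 / 2)) (Icc 0 (1 / 2)) := by
  rintro t ⟨ht0, ht⟩
  have hden : 0 < m * (1 - t) := by nlinarith
  refine ⟨div_nonneg (add_nonneg (mul_nonneg hc.1 (mul_nonneg hm.le ht0))
    (mul_nonneg hg.1 (by linarith))) hden.le, ?_⟩
  rw [ngonReduced, div_le_iff₀ hden]
  nlinarith [mul_nonneg (sub_nonneg.2 hc.2) (mul_nonneg hm.le ht0),
    mul_nonneg (sub_nonneg.2 hg.2) (by linarith : (0 : ℝ) ≤ 1 - 2 * t)]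

/-- The derivative of `ngonReduced m c g` has the sign of `m * c - g`. -/
theorem ngonReduced_monotoneOn (hm : 0 < m) (hgc : g ≤ m * c) :
    MonotoneOn (ngonReduced m c g) (Iio 1) := by
  intro t₁ ht₁ t₂ ht₂ hle
  have hd₁ : 0 < m * (1 - t₁) := mul_pos hm (sub_pos.2 ht₁)
  have hd₂ : 0 < m * (1 - t₂) := mul_pos hm (sub_pos.2 ht₂)
  rw [ngonReduced, ngonReduced, div_le_div_iff₀ hd₁ hd₂]
  nlinarith [mul_nonneg hm.le (mul_nonneg (sub_nonneg.2 hgc) (sub_nonneg.2 hle))]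

end ReducedMap

section Segment

variable {n : ℕ}

noncomputable def ngonLine (n : ℕ) (t : ℝ) : (Fin n → ℝ) × ℝ :=
  (fun j => if (j : ℕ) = 0 then t else (1 - 2 * t) / ((n : ℝ) - 1), t)

theorem continuous_ngonLine : Continuous (ngonLine n) :=
  (continuous_pi fun j => by
    by_cases hj : (j : ℕ) = 0 <;> simp only [hj, if_true, if_false] <;> fun_prop).prodMk
    continuous_id

noncomputable def ngonMean (γ x : Fin n → ℝ) : ℝ :=
  (∑ i, γ i * x i) / ∑ i, x i

theorem ngonOp_eq_ngonLine (γ : Fin n → ℝ) {p : (Fin n → ℝ) × ℝ} (hp : ∑ i, p.1 i ≠ 0) :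
    ngonOp n γ p = ngonLine n (ngonMean γ p.1) := by
  have hsum : ∑ i, (1 - 2 * γ i) * p.1 i = ∑ i, p.1 i - 2 * ∑ i, γ i * p.1 i := by
    simp only [sub_mul, one_mul, sum_sub_distrib, mul_assoc, ← mul_sum]
  refine Prod.ext (funext fun j => ?_) rfl
  by_cases hj : (j : ℕ) = 0
  · simp only [ngonOp, ngonLine, ngonMean, hj, if_true]
  · simp only [ngonOp, ngonLine, ngonMean, hj, if_false, hsum]
    rw [mul_comm ((n : ℝ) - 1), ← div_div, sub_div, div_self hp, mul_div_assoc]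

theorem ngonMean_mem_Icc {γ x : Fin n → ℝ} (hγ : ∀ i, 0 ≤ γ i ∧ γ i ≤ 1 / 2)
    (hx : ∀ i, 0 ≤ x i) (hpos : 0 < ∑ i, x i) : ngonMean γ x ∈ Set.Icc 0 (1 / 2) := by
  refine ⟨div_nonneg (sum_nonneg fun i _ => mul_nonneg (hγ i).1 (hx i)) hpos.le, ?_⟩
  rw [ngonMean, div_le_iff₀ hpos, mul_sum]
  exact sum_le_sum fun i _ => mul_le_mul_of_nonneg_right (hγ i).2 (hx i)

theorem sum_mul_ngonLine (h : Fin n → ℝ) (t : ℝ) {i₀ : Fin n} (hi₀ : (i₀ : ℕ) = 0) :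
    ∑ i, h i * (ngonLine n t).1 i
      = h i₀ * t + (∑ i ∈ univ.erase i₀, h i) * ((1 - 2 * t) / ((n : ℝ) - 1)) := by
  rw [← add_sum_erase _ _ (mem_univ i₀), sum_mul]
  congr 1
  · simp [ngonLine, hi₀]
  · refine sum_congr rfl fun i hi => ?_
    have hi0 : (i : ℕ) ≠ 0 := fun h0 => (mem_erase.1 hi).1 (Fin.ext (h0.trans hi₀.symm))
    simp [ngonLine, hi0]

theorem card_univ_erase_eq_sub_one {i₀ : Fin n} :
    ((univ.erase i₀).card : ℝ) = (n : ℝ) - 1 := by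
  rw [card_erase_of_mem (mem_univ _), card_univ, Fintype.card_fin,
    Nat.cast_pred (Fin.pos i₀)]

theorem ngonOp_ngonLine (hn : 1 < n) (γ : Fin n → ℝ) {i₀ : Fin n} (hi₀ : (i₀ : ℕ) = 0)
    {t : ℝ} (ht : t ≠ 1) :
    ngonOp n γ (ngonLine n t)
      = ngonLine n (ngonReduced ((n : ℝ) - 1) (γ i₀) (∑ i ∈ univ.erase i₀, γ i) t) := by
  have hm : (n : ℝ) - 1 ≠ 0 := sub_ne_zero.2 (by exact_mod_cast hn.ne')
  have hmass : ∑ i, (ngonLine n t).1 i = 1 - t := by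
    have h := sum_mul_ngonLine 1 t hi₀
    simp only [Pi.one_apply, one_mul, sum_const, nsmul_eq_mul, mul_one,
      card_univ_erase_eq_sub_one] at h
    rw [h, mul_div_cancel₀ _ hm]
    ring
  rw [ngonOp_eq_ngonLine γ (hmass ▸ sub_ne_zero.2 ht.symm), ngonMean, hmass,
    sum_mul_ngonLine γ t hi₀, ngonReduced]
  congr 1
  field_simp [sub_ne_zero.2 ht.symm]

end Segment

theorem ngonOp_trajectory_converges (n : ℕ) (hn : 1 < n) (γ : Fin n → ℝ)
    (hγ : ∀ i, 0 ≤ γ i ∧ γ i ≤ 1 / 2)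
    (hcond : γ ⟨0, by omega⟩ = 1 / 2 ∨
      ∑ i ∈ Finset.univ.erase ⟨0, by omega⟩, γ i = ((n : ℝ) - 1) * γ ⟨0, by omega⟩)
    (s : (Fin n → ℝ) × ℝ) (hs : s ∈ {q ∈ Sn1 n | ∃ i, 0 < γ i * q.1 i}) :
    ∃ L : (Fin n → ℝ) × ℝ,
      Filter.Tendsto (fun k => (ngonOp n γ)^[k] s) Filter.atTop (nhds L) := by
  obtain ⟨⟨hx, -, hpos, -⟩, -⟩ := hs
  set i₀ : Fin n := ⟨0, by omega⟩
  set f := ngonReduced ((n : ℝ) - 1) (γ i₀) (∑ i ∈ univ.erase i₀, γ i)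
  have hm : (0 : ℝ) < n - 1 := sub_pos.2 (by exact_mod_cast hn)
  have hg_le : ∑ i ∈ univ.erase i₀, γ i ≤ ((n : ℝ) - 1) / 2 := by
    calc ∑ i ∈ univ.erase i₀, γ i ≤ ∑ _i ∈ univ.erase i₀, (1 / 2 : ℝ) :=
          sum_le_sum fun i _ => (hγ i).2
      _ = ((n : ℝ) - 1) / 2 := by rw [sum_const, nsmul_eq_mul, card_univ_erase_eq_sub_one]; ring
  have hgc : ∑ i ∈ univ.erase i₀, γ i ≤ ((n : ℝ) - 1) * γ i₀ := by
    rcases hcond with h | h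
    · rw [h]; linarith
    · exact h.le
  have hmaps : Set.MapsTo f (Set.Icc 0 (1 / 2)) (Set.Icc 0 (1 / 2)) :=
    ngonReduced_mapsTo hm (hγ i₀) ⟨sum_nonneg fun i _ => (hγ i).1, hg_le⟩
  have hmono : MonotoneOn f (Set.Icc 0 (1 / 2)) :=
    (ngonReduced_monotoneOn hm hgc).mono fun t ht => show t < 1 by linarith [ht.2]
  have ht₀ := ngonMean_mem_Icc hγ hx hpos
  obtain ⟨ℓ, hℓ⟩ := hmono.exists_tendsto_iterate_of_mapsTo_Icc hmaps ht₀
  have horbit : ∀ k, (ngonOp n γ)^[k + 1] s = ngonLine n (f^[k] (ngonMean γ s.1)) := fun k => by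
    rw [Function.iterate_succ_apply, ngonOp_eq_ngonLine γ hpos.ne']
    exact iterate_apply_eq_of_semiconjOn (e := ngonLine n) hmaps
      (fun t ht => ngonOp_ngonLine hn γ rfl (show t ≠ 1 by linarith [ht.2])) ht₀ k
  refine ⟨ngonLine n ℓ, (Filter.tendsto_add_atTop_iff_nat 1).1 ?_⟩
  rw [funext horbit]
  exact (continuous_ngonLine.tendsto ℓ).comp hℓ
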